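/- arXiv:1312.3705 — 4 statements merged into one kernel-verified Lean document; each statement's English description precedes it below -/
import Mathlib

section
/- Let ξ ∈ ℂ× be such that ξ⁴ is a primitive N-th root of unity (N ≥ 1), and set λ_k = −(ξ^{2k+2} + ξ^{−2k−2}). If 1 ≤ k ≤ N−1, then λ_{2k} = λ_0 if and only if k = N−1. -/
/-!
Put `q = ξ⁴` and `z = ξ²`, so that `λ_{2k} = -(q^k z + (q^k z)⁻¹)` and `λ_0 = -(z + z⁻¹)`.
Since `a + a⁻¹ = b + b⁻¹` forces `a = b` or `a = b⁻¹`, the equation `λ_{2k} = λ_0` says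
`q^k = 1` or `q^k z² = q^(k+1) = 1`. For `1 ≤ k ≤ N - 1` the first is impossible and the
second holds exactly when `k + 1 = N`, because `q` has exact order `N`.
-/

theorem add_inv_eq_add_inv_iff {K : Type*} [Field K] {a b : K} (ha : a ≠ 0) (hb : b ≠ 0) :
    a + a⁻¹ = b + b⁻¹ ↔ a = b ∨ a = b⁻¹ := by
  have key : a + a⁻¹ - (b + b⁻¹) = (a - b) * (a * b - 1) / (a * b) := by
    field_simp
    ring
  rw [← sub_eq_zero, key, div_eq_zero_iff, mul_eq_zero, sub_eq_zero, sub_eq_zero,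
    mul_eq_one_iff_eq_inv₀ hb, or_iff_left (mul_ne_zero ha hb)]

theorem mul_add_inv_mul_eq_add_inv_iff {K : Type*} [Field K] {w z : K} (hw : w ≠ 0)
    (hz : z ≠ 0) : w * z + (w * z)⁻¹ = z + z⁻¹ ↔ w = 1 ∨ w * z ^ 2 = 1 := by
  rw [add_inv_eq_add_inv_iff (mul_ne_zero hw hz) hz, mul_eq_right₀ hz,
    ← mul_eq_one_iff_eq_inv₀ hz, mul_assoc, ← sq]

theorem IsPrimitiveRoot.pow_eq_one_iff_eq {M : Type*} [CommMonoid M] {q : M} {N m : ℕ}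
    (hq : IsPrimitiveRoot q N) (hm0 : m ≠ 0) (hmN : m ≤ N) : q ^ m = 1 ↔ m = N := by
  refine ⟨fun h => ?_, fun h => h ▸ hq.pow_eq_one⟩
  exact le_antisymm hmN (Nat.le_of_dvd (Nat.pos_of_ne_zero hm0) ((hq.pow_eq_one_iff_dvd m).mp h))

theorem lambda_two_k_eq_lambda_zero_iff_general (ξ : ℂ) (N : ℕ)
    (hprim : IsPrimitiveRoot (ξ ^ 4) N) (k : ℕ) (hk1 : 1 ≤ k) (hk2 : k ≤ N - 1) :
    (-(ξ ^ (2 * (2 * k) + 2) + ξ⁻¹ ^ (2 * (2 * k) + 2)) = -(ξ ^ 2 + ξ⁻¹ ^ 2)) ↔ k = N - 1 := by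
  have hξ : ξ ≠ 0 := fun h => hprim.ne_zero (by omega) (by simp [h])
  have hpow : ξ ^ (2 * (2 * k) + 2) = (ξ ^ 4) ^ k * ξ ^ 2 := by ring
  have hsq : (ξ ^ 2) ^ 2 = ξ ^ 4 := by ring
  rw [neg_inj, inv_pow, inv_pow, hpow,
    mul_add_inv_mul_eq_add_inv_iff (by simp [hξ]) (by simp [hξ]), hsq, ← pow_succ,
    hprim.pow_eq_one_iff_eq (m := k + 1) (by omega) (by omega),
    or_iff_right (hprim.pow_ne_one_of_pos_of_lt (by omega) (by omega))]
  omega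

theorem lambda_two_k_eq_lambda_zero_iff (ξ : ℂ) (hξ : ξ ≠ 0) (N : ℕ) (hN : 1 ≤ N)
    (hprim : IsPrimitiveRoot (ξ ^ 4) N) (k : ℕ) (hk1 : 1 ≤ k) (hk2 : k ≤ N - 1) :
    (-(ξ ^ (2 * (2 * k) + 2) + ξ⁻¹ ^ (2 * (2 * k) + 2)) = -(ξ ^ 2 + ξ⁻¹ ^ 2)) ↔ k = N - 1 :=
  lambda_two_k_eq_lambda_zero_iff_general ξ N hprim k hk1 hk2
end

section
/- Let ξ ∈ ℂ× be such that ξ⁴ is a primitive N-th root of unity, and set λ_k = −(ξ^{2k+2} + ξ^{−2k−2}). If 1 ≤ k ≤ N−1 and λ_k = ξ^{2N}·λ_0, then k = N−2. -/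
/-! With `q = ξ²`, the hypothesis reads `x + x⁻¹ = ε q + (ε q)⁻¹` for `x = q^(k+1)` and the sign
`ε = q^N = ±1`. Hence `x = ε q` or `x = (ε q)⁻¹`; squaring, `(ξ⁴)^k = 1` or `(ξ⁴)^(k+2) = 1`, so
`N ∣ k` (impossible for `1 ≤ k < N`) or `N ∣ k + 2`, which forces `k + 2 = N`. -/

theorem add_inv_eq_add_inv_iff_s6 {K : Type*} [Field K] {x y : K} (hx : x ≠ 0) (hy : y ≠ 0) :
    x + x⁻¹ = y + y⁻¹ ↔ x = y ∨ x = y⁻¹ := by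
  constructor
  · intro h
    have hprod : (x - y) * (x - y⁻¹) = 0 := by
      linear_combination x * h - mul_inv_cancel₀ hx + mul_inv_cancel₀ hy
    simpa only [mul_eq_zero, sub_eq_zero] using hprod
  · rintro (rfl | rfl)
    · rfl
    · rw [inv_inv, add_comm]

theorem mul_add_inv_of_sq_eq_one {K : Type*} [Field K] {ε : K} (hε : ε ^ 2 = 1) (q : K) :
    ε * (q + q⁻¹) = ε * q + (ε * q)⁻¹ := by
  have hε_inv : ε⁻¹ = ε := by
    rw [inv_eq_of_mul_eq_one_right (by rw [← sq, hε])]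
  rw [mul_inv, hε_inv, mul_add]

theorem IsPrimitiveRoot.dvd_or_dvd_add_two_of_pow_add_inv_eq {K : Type*} [Field K] {q : K}
    (hq : q ≠ 0) {N : ℕ} (hprim : IsPrimitiveRoot (q ^ 2) N) {k : ℕ}
    (h : q ^ (k + 1) + (q ^ (k + 1))⁻¹ = q ^ N * (q + q⁻¹)) :
    N ∣ k ∨ N ∣ k + 2 := by
  have hsign : (q ^ N) ^ 2 = 1 := by rw [pow_right_comm, hprim.pow_eq_one]
  rw [mul_add_inv_of_sq_eq_one hsign,
    add_inv_eq_add_inv_iff_s6 (pow_ne_zero _ hq) (mul_ne_zero (pow_ne_zero _ hq) hq)] at h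
  rcases h with h | h
  · left
    have hk : q ^ k = q ^ N := mul_right_cancel₀ hq (by rw [← pow_succ, h])
    rw [← hprim.pow_eq_one_iff_dvd, pow_right_comm, hk, ← pow_right_comm, hprim.pow_eq_one]
  · right
    have hk : q ^ (k + 2) * q ^ N = 1 := by
      rw [pow_succ q (k + 1), h, mul_assoc, mul_comm q,
        inv_mul_cancel₀ (mul_ne_zero (pow_ne_zero _ hq) hq)]
    rw [← hprim.pow_eq_one_iff_dvd]
    calc (q ^ 2) ^ (k + 2) = (q ^ (k + 2) * q ^ N) ^ 2 := by
          rw [mul_pow, hsign, mul_one, pow_right_comm]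
      _ = 1 := by rw [hk, one_pow]

theorem lambda_k_eq_xi_pow_mul_lambda_zero (ξ : ℂ) (hξ : ξ ≠ 0) (N : ℕ)
    (hprim : IsPrimitiveRoot (ξ ^ 4) N) (k : ℕ) (hk1 : 1 ≤ k) (hk2 : k ≤ N - 1)
    (h : -(ξ ^ (2 * k + 2) + ξ⁻¹ ^ (2 * k + 2)) = ξ ^ (2 * N) * -(ξ ^ 2 + ξ⁻¹ ^ 2)) :
    k = N - 2 := by
  have hprim' : IsPrimitiveRoot ((ξ ^ 2) ^ 2) N := by rwa [← pow_mul]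
  have h' : (ξ ^ 2) ^ (k + 1) + ((ξ ^ 2) ^ (k + 1))⁻¹ = (ξ ^ 2) ^ N * (ξ ^ 2 + (ξ ^ 2)⁻¹) := by
    simpa only [← pow_mul, inv_pow, mul_add_one, mul_neg, neg_inj] using h
  rcases hprim'.dvd_or_dvd_add_two_of_pow_add_inv_eq (pow_ne_zero 2 hξ) h' with hdvd | hdvd
  · exact absurd (Nat.eq_zero_of_dvd_of_lt hdvd (by omega)) (by omega)
  · have := Nat.eq_of_dvd_of_lt_two_mul (by omega) hdvd (by omega)
    omega
end

section
/- Let ξ ∈ ℂ× be such that ξ⁴ is a primitive N-th root of unity. Then ξ^{2N²+2N} = (−1)^{N+1}. -/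
/-!
Put `ε = ξ ^ (2 * N)`, so that `ξ ^ (2 * N ^ 2 + 2 * N) = ε ^ (N + 1)` and `ε ^ 2 = (ξ ^ 4) ^ N = 1`.
For odd `N` the exponent `N + 1` is even and both sides are `1`. For even `N = 2 * m`,
`ε = (ξ ^ 4) ^ m` is a primitive square root of unity, i.e. `ε = -1`.
-/

theorem IsPrimitiveRoot.pow_eq_neg_one_of_two_mul {R : Type*} [CommRing R] [NoZeroDivisors R]
    {ζ : R} {m : ℕ} (h : IsPrimitiveRoot ζ (2 * m)) (hm : 0 < m) : ζ ^ m = -1 :=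
  (h.pow (by omega) (mul_comm 2 m)).eq_neg_one_of_two_right

theorem xi_pow_identity_general (ξ : ℂ) (N : ℕ) (hN : 1 ≤ N)
    (hprim : IsPrimitiveRoot (ξ ^ 4) N) :
    ξ ^ (2 * N ^ 2 + 2 * N) = (-1 : ℂ) ^ (N + 1) := by
  rcases Nat.even_or_odd' N with ⟨m, rfl | rfl⟩
  · have hε : ξ ^ (2 * (2 * m)) = -1 := by
      rw [← mul_assoc, pow_mul]
      exact hprim.pow_eq_neg_one_of_two_mul (by omega)
    rw [← hε, ← pow_mul]
    ring_nf
  · have hε : (ξ ^ 4) ^ (2 * m + 1) = 1 := hprim.pow_eq_one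
    calc ξ ^ (2 * (2 * m + 1) ^ 2 + 2 * (2 * m + 1))
        = ((ξ ^ 4) ^ (2 * m + 1)) ^ (m + 1) := by rw [← pow_mul, ← pow_mul]; ring_nf
      _ = (-1 : ℂ) ^ (2 * m + 1 + 1) := by
        rw [hε, one_pow, show 2 * m + 1 + 1 = 2 * (m + 1) by ring, pow_mul]
        norm_num

theorem xi_pow_identity (ξ : ℂ) (hξ : ξ ≠ 0) (N : ℕ) (hN : 1 ≤ N)
    (hprim : IsPrimitiveRoot (ξ ^ 4) N) :
    ξ ^ (2 * N ^ 2 + 2 * N) = (-1 : ℂ) ^ (N + 1) :=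
  xi_pow_identity_general ξ N hN hprim
end

section
/- Let ξ be a complex number with ξ² a primitive N-th root of unity, and let p(z) = Σ_{j=0}^{k} c_j T_j(z) with c_k ≠ 0, k ≥ 1. If for every j, c_j = 0 or ξ^{2j} = 1, then N divides k and p ∈ ℂ[T_N], i.e. p is a polynomial in T_N(z). -/
open Polynomial

/-- Chebyshev polynomial of the first kind, normalized by `T 0 = 2`, `T 1 = X`. -/
noncomputable def chebT (R : Type*) [CommRing R] : ℕ → Polynomial R
  | 0 => 2
  | 1 => X
  | (n + 2) => X * chebT R (n + 1) - chebT R n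

/-- Chebyshev polynomial of the second kind, `S 0 = 1`, `S 1 = X`. -/
noncomputable def chebS (R : Type*) [CommRing R] : ℕ → Polynomial R
  | 0 => 1
  | 1 => X
  | (n + 2) => X * chebS R (n + 1) - chebS R n

/-! Since `T_{N m} = T_m ∘ T_N`, every `T_j` with `N ∣ j` is a polynomial in `T_N`; the hypothesis
on the coefficients forces `N ∣ j` for every `j` with `c j ≠ 0`, in particular for `j = k`. -/

section Chebyshev

variable (R : Type*) [CommRing R]

theorem chebT_eq_dickson : ∀ n, chebT R n = dickson 1 1 n
  | 0 => by rw [chebT, dickson_zero]; norm_num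
  | 1 => by rw [chebT, dickson_one]
  | n + 2 => by
    rw [chebT, dickson_add_two, chebT_eq_dickson (n + 1), chebT_eq_dickson n, map_one, one_mul]

theorem chebT_mul (m n : ℕ) : chebT R (m * n) = (chebT R m).comp (chebT R n) := by
  simp only [chebT_eq_dickson, dickson_one_one_mul]

variable {R}

theorem chebT_mem_range_aeval_chebT {m n : ℕ} (h : m ∣ n) :
    chebT R n ∈ (aeval (chebT R m) : R[X] →ₐ[R] R[X]).range := by
  obtain ⟨d, rfl⟩ := h
  exact (AlgHom.mem_range _).mpr ⟨chebT R d, by rw [← comp_eq_aeval, ← chebT_mul, mul_comm]⟩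

end Chebyshev

theorem central_polynomial_in_chebTN_general (ξ : ℂ) (N : ℕ)
    (hprim : IsPrimitiveRoot (ξ ^ 2) N) (k : ℕ) (c : ℕ → ℂ) (hck : c k ≠ 0)
    (h : ∀ j ≤ k, c j = 0 ∨ ξ ^ (2 * j) = 1) :
    N ∣ k ∧
      (∑ j ∈ Finset.range (k + 1), C (c j) * chebT ℂ j) ∈
        (Polynomial.aeval (chebT ℂ N) : Polynomial ℂ →ₐ[ℂ] Polynomial ℂ).range := by
  have hdvd : ∀ j ≤ k, c j ≠ 0 → N ∣ j := fun j hj hcj =>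
    hprim.dvd_of_pow_eq_one j <| by rw [← pow_mul]; exact (h j hj).resolve_left hcj
  refine ⟨hdvd k le_rfl hck, Subalgebra.sum_mem _ fun j hj => ?_⟩
  rcases eq_or_ne (c j) 0 with hcj | hcj
  · simp only [hcj, map_zero, zero_mul, Subalgebra.zero_mem]
  · exact Subalgebra.mul_mem _ (Subalgebra.algebraMap_mem _ (c j))
      (chebT_mem_range_aeval_chebT (hdvd j (Finset.mem_range_succ_iff.mp hj) hcj))

theorem central_polynomial_in_chebTN (ξ : ℂ) (hξ : ξ ≠ 0) (N : ℕ)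
    (hprim : IsPrimitiveRoot (ξ ^ 2) N) (k : ℕ) (hk : 1 ≤ k) (c : ℕ → ℂ) (hck : c k ≠ 0)
    (h : ∀ j ≤ k, c j = 0 ∨ ξ ^ (2 * j) = 1) :
    N ∣ k ∧
      (∑ j ∈ Finset.range (k + 1), C (c j) * chebT ℂ j) ∈
        (Polynomial.aeval (chebT ℂ N) : Polynomial ℂ →ₐ[ℂ] Polynomial ℂ).range :=
  central_polynomial_in_chebTN_general ξ N hprim k c hck h
end
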